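/- Let D be a finite strongly connected directed graph with nonnegative edge costs, r a fixed root vertex, T_in a minimum-cost in-branching to r (spanning arborescence where every vertex reaches r) and T_out a minimum-cost out-branching from r. Then the union of T_in and T_out is a strongly connected spanning subdigraph whose cost is at most twice the cost of a minimum strongly connected spanning subdigraph. -/

import Mathlib

/-- Cost of a subdigraph given as a relation: sum of costs of its edges. -/
noncomputable def digraphCost {V : Type*} [Fintype V] (b : V × V → NNReal)
    (F : V → V → Prop) : NNReal :=
  ∑ p ∈ (Set.toFinite {p : V × V | F p.1 p.2}).toFinset, b p

def Subdigraph {V : Type*} (E F : V → V → Prop) : Prop := ∀ u v, F u v → E u v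

def StronglyConnectedRel {V : Type*} (F : V → V → Prop) : Prop :=
  ∀ u v, Relation.ReflTransGen F u v

lemma digraphCost_union_le {V : Type*} [Fintype V] (b : V × V → NNReal)
    (F G : V → V → Prop) :
    digraphCost b (fun u v => F u v ∨ G u v) ≤ digraphCost b F + digraphCost b G := by
  classical
  unfold digraphCost
  have h : (Set.toFinite {p : V × V | F p.1 p.2 ∨ G p.1 p.2}).toFinset =
      (Set.toFinite {p : V × V | F p.1 p.2}).toFinset ∪
      (Set.toFinite {p : V × V | G p.1 p.2}).toFinset := by
    ext p; simp [Set.Finite.mem_toFinset]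
  rw [h]
  exact le_self_add.trans_eq (Finset.sum_union_inter)

/-- The union of a minimum-cost in-branching and a minimum-cost out-branching
rooted at `r` is a strongly connected spanning subdigraph of cost at most twice
the minimum strongly connected spanning subdigraph (MSSS) cost. -/
theorem branching_union_two_approx {V : Type*} [Fintype V]
    (E : V → V → Prop) (b : V × V → NNReal) (r : V)
    (hSC : StronglyConnectedRel E)
    (Tin Tout : V → V → Prop)
    (hTinE : Subdigraph E Tin) (hToutE : Subdigraph E Tout)
    (hTin : ∀ v, Relation.ReflTransGen Tin v r)
    (hTout : ∀ v, Relation.ReflTransGen Tout r v)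
    (hTinMin : ∀ T : V → V → Prop, Subdigraph E T →
      (∀ v, Relation.ReflTransGen T v r) → digraphCost b Tin ≤ digraphCost b T)
    (hToutMin : ∀ T : V → V → Prop, Subdigraph E T →
      (∀ v, Relation.ReflTransGen T r v) → digraphCost b Tout ≤ digraphCost b T) :
    Subdigraph E (fun u v => Tin u v ∨ Tout u v) ∧
    StronglyConnectedRel (fun u v => Tin u v ∨ Tout u v) ∧
    ∀ H : V → V → Prop, Subdigraph E H → StronglyConnectedRel H →
      digraphCost b (fun u v => Tin u v ∨ Tout u v) ≤ 2 * digraphCost b H := by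
  refine ⟨fun u v h => h.elim (hTinE u v) (hToutE u v), ?_, ?_⟩
  · intro u v
    have h1 : Relation.ReflTransGen (fun u v => Tin u v ∨ Tout u v) u r :=
      Relation.ReflTransGen.mono (fun a c h => Or.inl h) u r (hTin u)
    have h2 : Relation.ReflTransGen (fun u v => Tin u v ∨ Tout u v) r v :=
      Relation.ReflTransGen.mono (fun a c h => Or.inr h) r v (hTout v)
    exact h1.trans h2
  · intro H hHE hHSC
    have h1 : digraphCost b Tin ≤ digraphCost b H := hTinMin H hHE (fun v => hHSC v r)
    have h2 : digraphCost b Tout ≤ digraphCost b H := hToutMin H hHE (fun v => hHSC r v)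
    calc digraphCost b (fun u v => Tin u v ∨ Tout u v)
        ≤ digraphCost b Tin + digraphCost b Tout := digraphCost_union_le b Tin Tout
      _ ≤ digraphCost b H + digraphCost b H := add_le_add h1 h2
      _ = 2 * digraphCost b H := (two_mul _).symm
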